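/- (Covariance of scaled residual levels with future scaled residual growth under heterogeneous skill-growth profiles.) In the HIP setting, assume in addition that cov(θ_t, ν_{t'}) = 0 whenever t' > t and cov(θ_t, ε_s) = 0 for all t, s. Then for all integers t, t' with t' − t ≥ k + 1, if μ_t, μ_{t'}, μ_{t'−1} are all nonzero, then cov( w_t/μ_t , w_{t'}/μ_{t'} − w_{t'−1}/μ_{t'−1} ) = λ_{t'} · cov(θ_t, δ). -/

import Mathlib

open MeasureTheory ProbabilityTheory

/-- Covariance of two real-valued random variables under measure `P`. -/
noncomputable def cov {Ω : Type*} [MeasurableSpace Ω] (P : Measure Ω) (X Y : Ω → ℝ) : ℝ :=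
  ∫ ω, (X ω - ∫ a, X a ∂P) * (Y ω - ∫ a, Y a ∂P) ∂P

/-- Variance of a real-valued random variable under measure `P`. -/
noncomputable def Var {Ω : Type*} [MeasurableSpace Ω] (P : Measure Ω) (X : Ω → ℝ) : ℝ :=
  cov P X X

/-! Dividing by `μ_s` turns `w_s / μ_s` into `θ_s + μ_s⁻¹ ε_s`, so by the HIP equation the growth
term is `λ_{t'} δ + ν_{t'}` plus a combination of `ε_{t'}` and `ε_{t'-1}`. Expanding the covariance
bilinearly, every cross term vanishes except `λ_{t'} cov(θ_t, δ)`: the gap `t' - t ≥ k + 1` puts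
`ε_t` at lag at least `k` from both `ε_{t'}` and `ε_{t'-1}`, and `ν_{t'}` lies in the future of
`θ_t`. -/

lemma mul_add_div_eq_add_inv_mul {m : ℝ} (hm : m ≠ 0) (x e : ℝ) :
    (m * x + e) / m = x + m⁻¹ * e := by
  field_simp

section Covariance

variable {Ω : Type*} [MeasurableSpace Ω] {P : Measure Ω}

lemma cov_eq_covariance (X Y : Ω → ℝ) : cov P X Y = cov[X, Y; P] := rfl

variable [IsFiniteMeasure P] {X Y Z₁ Z₂ : Ω → ℝ}

lemma covariance_add_sub_smul_eq_zero (hX : MemLp X 2 P) (hY : MemLp Y 2 P)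
    (hZ₁ : MemLp Z₁ 2 P) (hZ₂ : MemLp Z₂ 2 P) (a b : ℝ)
    (hXY : cov[X, Y; P] = 0) (hXZ₁ : cov[X, Z₁; P] = 0) (hXZ₂ : cov[X, Z₂; P] = 0) :
    cov[X, Y + (a • Z₁ - b • Z₂); P] = 0 := by
  rw [covariance_add_right hX hY ((hZ₁.const_smul a).sub (hZ₂.const_smul b)),
    covariance_sub_right hX (hZ₁.const_smul a) (hZ₂.const_smul b),
    covariance_smul_right, covariance_smul_right, hXY, hXZ₁, hXZ₂]
  ring

lemma covariance_add_smul_smul_add_of_uncorrelated {E D R : Ω → ℝ} (hX : MemLp X 2 P)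
    (hE : MemLp E 2 P) (hD : MemLp D 2 P) (hR : MemLp R 2 P) (c l : ℝ)
    (hXR : cov[X, R; P] = 0) (hED : cov[E, D; P] = 0) (hER : cov[E, R; P] = 0) :
    cov[X + c • E, l • D + R; P] = l * cov[X, D; P] := by
  rw [covariance_add_left hX (hE.const_smul c) ((hD.const_smul l).add hR),
    covariance_add_right hX (hD.const_smul l) hR,
    covariance_add_right (hE.const_smul c) (hD.const_smul l) hR,
    covariance_smul_left, covariance_smul_left, covariance_smul_right, covariance_smul_right,
    hXR, hED, hER]
  ring

end Covariance

theorem HIP_cov_level_future_growth_general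
    {Ω : Type*} [MeasurableSpace Ω] (P : Measure Ω) [IsProbabilityMeasure P]
    (θ ε : ℤ → Ω → ℝ) (μ : ℤ → ℝ) (w : ℤ → Ω → ℝ)
    (hθ : ∀ t, MemLp (θ t) 2 P) (hε : ∀ t, MemLp (ε t) 2 P)
    (hw : ∀ t ω, w t ω = μ t * θ t ω + ε t ω)
    (k : ℕ)
    (δ : Ω → ℝ) (lam : ℤ → ℝ) (ν : ℤ → Ω → ℝ)
    (hδ : MemLp δ 2 P) (hν : ∀ t, MemLp (ν t) 2 P)
    (hHIP : ∀ (t : ℤ) (ω : Ω), θ t ω - θ (t - 1) ω = lam t * δ ω + ν t ω)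
    (hδε : ∀ t : ℤ, cov P δ (ε t) = 0)
    (hνε : ∀ t t' : ℤ, cov P (ν t) (ε t') = 0)
    (hεε : ∀ t t' : ℤ, (k : ℤ) ≤ |t - t'| → cov P (ε t) (ε t') = 0)
    (hθν : ∀ t t' : ℤ, t < t' → cov P (θ t) (ν t') = 0)
    (hθε : ∀ t s : ℤ, cov P (θ t) (ε s) = 0) :
    ∀ t t' : ℤ, (k : ℤ) + 1 ≤ t' - t →
      μ t ≠ 0 → μ t' ≠ 0 → μ (t' - 1) ≠ 0 →
      cov P (fun ω => w t ω / μ t)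
        (fun ω => w t' ω / μ t' - w (t' - 1) ω / μ (t' - 1)) =
        lam t' * cov P (θ t) δ := by
  intro t t' hgap hμ hμ' hμ'₁
  set a := (μ t')⁻¹
  set b := (μ (t' - 1))⁻¹
  have level : (fun ω => w t ω / μ t) = θ t + (μ t)⁻¹ • ε t := by
    ext ω
    simp only [hw, mul_add_div_eq_add_inv_mul hμ, Pi.add_apply, Pi.smul_apply, smul_eq_mul]
  have growth : (fun ω => w t' ω / μ t' - w (t' - 1) ω / μ (t' - 1)) =
      lam t' • δ + (ν t' + (a • ε t' - b • ε (t' - 1))) := by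
    ext ω
    simp only [hw, mul_add_div_eq_add_inv_mul hμ', mul_add_div_eq_add_inv_mul hμ'₁,
      Pi.add_apply, Pi.sub_apply, Pi.smul_apply, smul_eq_mul]
    linear_combination hHIP t' ω
  have hε_far : cov P (ε t) (ε t') = 0 := hεε t t' (by rw [abs_of_nonpos (by omega)]; omega)
  have hε_far₁ : cov P (ε t) (ε (t' - 1)) = 0 :=
    hεε t (t' - 1) (by rw [abs_of_nonpos (by omega)]; omega)
  simp only [cov_eq_covariance, level, growth]
  refine covariance_add_smul_smul_add_of_uncorrelated (hθ t) (hε t) hδ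
    ((hν t').add (((hε t').const_smul a).sub ((hε (t' - 1)).const_smul b))) _ _
    (covariance_add_sub_smul_eq_zero (hθ t) (hν t') (hε t') (hε (t' - 1)) a b
      (hθν t t' (by omega)) (hθε t t') (hθε t (t' - 1)))
    (by rw [covariance_comm]; exact hδε t)
    (covariance_add_sub_smul_eq_zero (hε t) (hν t') (hε t') (hε (t' - 1)) a b
      (by rw [covariance_comm]; exact hνε t' t) hε_far hε_far₁)

/-- Covariance of scaled residual levels with future scaled residual growth under HIP:
for `t' - t ≥ k + 1`, `cov (w_t/μ_t, w_{t'}/μ_{t'} − w_{t'−1}/μ_{t'−1}) = λ_{t'} cov(θ_t, δ)`. -/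
theorem HIP_cov_level_future_growth
    {Ω : Type*} [MeasurableSpace Ω] (P : Measure Ω) [IsProbabilityMeasure P]
    (θ ε : ℤ → Ω → ℝ) (μ : ℤ → ℝ) (w : ℤ → Ω → ℝ)
    (hθ : ∀ t, MemLp (θ t) 2 P) (hε : ∀ t, MemLp (ε t) 2 P)
    (hw : ∀ t ω, w t ω = μ t * θ t ω + ε t ω)
    (k : ℕ) (hk : 1 ≤ k)
    (δ : Ω → ℝ) (lam : ℤ → ℝ) (ν : ℤ → Ω → ℝ)
    (hδ : MemLp δ 2 P) (hν : ∀ t, MemLp (ν t) 2 P)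
    (hHIP : ∀ (t : ℤ) (ω : Ω), θ t ω - θ (t - 1) ω = lam t * δ ω + ν t ω)
    (hδν : ∀ t : ℤ, cov P δ (ν t) = 0)
    (hνν : ∀ t t' : ℤ, t ≠ t' → cov P (ν t) (ν t') = 0)
    (hδε : ∀ t : ℤ, cov P δ (ε t) = 0)
    (hνε : ∀ t t' : ℤ, cov P (ν t) (ε t') = 0)
    (hεε : ∀ t t' : ℤ, (k : ℤ) ≤ |t - t'| → cov P (ε t) (ε t') = 0)
    (hθν : ∀ t t' : ℤ, t < t' → cov P (θ t) (ν t') = 0)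
    (hθε : ∀ t s : ℤ, cov P (θ t) (ε s) = 0) :
    ∀ t t' : ℤ, (k : ℤ) + 1 ≤ t' - t →
      μ t ≠ 0 → μ t' ≠ 0 → μ (t' - 1) ≠ 0 →
      cov P (fun ω => w t ω / μ t)
        (fun ω => w t' ω / μ t' - w (t' - 1) ω / μ (t' - 1)) =
        lam t' * cov P (θ t) δ :=
  HIP_cov_level_future_growth_general P θ ε μ w hθ hε hw k δ lam ν hδ hν hHIP hδε hνε hεε hθν hθε
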